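/- Let k be a field, R an integral domain that is a k-algebra with fraction field K, and I_K ⊆ K ⊗_k K the kernel of the multiplication map. For any r ∈ R with r ≠ 0, the image of r ⊗ 1 in K ⊗_k K / I_K^(n+1) is invertible. -/
import Mathlib


open TensorProduct

/-- For a field `k`, a domain `R` which is a `k`-algebra with fraction field `K`, and
`I_K ⊆ K ⊗[k] K` the kernel of the multiplication map: for any nonzero `r ∈ R`, the image
of `r ⊗ 1` in `K ⊗[k] K / I_K^(n+1)` is invertible. -/
theorem image_tensor_one_isUnit (k R K : Type*) [Field k] [CommRing R] [IsDomain R]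
    [Algebra k R] [Field K] [Algebra k K] [Algebra R K] [IsScalarTower k R K]
    [IsFractionRing R K] (n : ℕ) (r : R) (hr : r ≠ 0) :
    IsUnit (Ideal.Quotient.mk
      ((RingHom.ker (Algebra.TensorProduct.lmul' k (S := K)).toRingHom) ^ (n + 1))
      (algebraMap R K r ⊗ₜ[k] (1 : K))) := by
  set I := RingHom.ker (Algebra.TensorProduct.lmul' k (S := K)).toRingHom
  set x : K := algebraMap R K r
  have hx : x ≠ 0 := by
    simpa [x] using (map_ne_zero_iff _ (IsFractionRing.injective R K)).mpr hr
  have hmem : (x ⊗ₜ[k] (1 : K) - (1 : K) ⊗ₜ[k] x) ∈ I := by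
    simp [I, RingHom.mem_ker]
  have key : x ⊗ₜ[k] (1 : K) = (x ⊗ₜ[k] (1 : K) - (1 : K) ⊗ₜ[k] x) + (1 : K) ⊗ₜ[k] x := by
    ring
  rw [key, map_add]
  refine IsNilpotent.isUnit_add_right_of_commute ?_ ?_ (Commute.all _ _)
  · refine ⟨n + 1, ?_⟩
    rw [← map_pow, Ideal.Quotient.eq_zero_iff_mem]
    exact Ideal.pow_mem_pow hmem _
  · have h1 : IsUnit ((1 : K) ⊗ₜ[k] x) := by
      have hxu : IsUnit x := hx.isUnit
      exact hxu.map (Algebra.TensorProduct.includeRight (R := k) (A := K) (B := K)).toRingHom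
    exact h1.map _
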